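/- (Block SPS exactness for independent noise.) Fix a block length T with n = KT for an integer K. Suppose the random signs are generated blockwise: ᾱ_{i,k}, i ∈ {1,...,m−1}, k ∈ {1,...,K}, are i.i.d. random signs, and α_{i,(k−1)T+j} := ᾱ_{i,k} for j ∈ {1,...,T}. Under assumptions A1 (the noises N₁,...,Nₙ are independent and each symmetrically distributed about zero) and A2 (Rₙ is invertible), the Block SPS confidence region still satisfies P(θ* ∈ Θ̂ₙ) = 1 − q/m. -/

import Mathlib

open MeasureTheory ProbabilityTheory Matrix
open scoped ENNReal

noncomputable section

/-- Squared Euclidean norm of a vector in `ℝ^d`. -/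
def spsNormSq {d : ℕ} (v : Fin d → ℝ) : ℝ := ∑ j, v j ^ 2

/-- The strict total order `≻_π`. -/
def SuccPi {m : ℕ} (σ : Equiv.Perm (Fin m)) (z : Fin m → ℝ) (k j : Fin m) : Prop :=
  z j < z k ∨ (z k = z j ∧ σ j < σ k)

/-- A random sign: takes values `1` and `-1` with probability `1/2` each. -/
def IsRandomSign {Ω : Type*} [MeasurableSpace Ω] (μ : Measure Ω) (f : Ω → ℝ) : Prop :=
  μ {ω | f ω = 1} = 1 / 2 ∧ μ {ω | f ω = -1} = 1 / 2

/-- The (sign-perturbed) sums `S_i(θ)`. -/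
def spsS {d n m : ℕ} (φ : Fin n → Fin d → ℝ) (Rhalf : Matrix (Fin d) (Fin d) ℝ)
    (Y : Fin n → ℝ) (a : Fin m → Fin n → ℝ) (i : Fin m) (θ : Fin d → ℝ) : Fin d → ℝ :=
  Rhalf⁻¹ *ᵥ ((n : ℝ)⁻¹ • ∑ t, (a i t * (Y t - φ t ⬝ᵥ θ)) • φ t)

/-- The rank `𝓡(θ)`. -/
def spsRank {d n m : ℕ} [NeZero m] (φ : Fin n → Fin d → ℝ)
    (Rhalf : Matrix (Fin d) (Fin d) ℝ) (Y : Fin n → ℝ) (a : Fin m → Fin n → ℝ)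
    (σ : Equiv.Perm (Fin m)) (θ : Fin d → ℝ) : ℕ :=
  1 + Set.ncard {i : Fin m | i ≠ 0 ∧
      SuccPi σ (fun j => spsNormSq (spsS φ Rhalf Y a j θ)) 0 i}

/-- The SPS confidence region `Θ̂ₙ`. -/
def spsRegion {d n m : ℕ} [NeZero m] (φ : Fin n → Fin d → ℝ)
    (Rhalf : Matrix (Fin d) (Fin d) ℝ) (Y : Fin n → ℝ) (a : Fin m → Fin n → ℝ)
    (σ : Equiv.Perm (Fin m)) (q : ℕ) : Set (Fin d → ℝ) :=
  {θ | spsRank φ Rhalf Y a σ θ ≤ m - q}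

/-- The block index of a time index `t ∈ {0, …, KT−1}`: block `⌊t/T⌋`. -/
def blockIdx (K T : ℕ) (t : Fin (K * T)) : Fin K :=
  ⟨t.1 / T, Nat.div_lt_of_lt_mul (Nat.mul_comm K T ▸ t.2)⟩

instance {k : ℕ} : MeasurableSpace (Equiv.Perm (Fin k)) := ⊤

/-!
Condition on the sign pattern `s` (with row `0` fixed to `+1`) and on the tie-breaking
permutation `σ`. There are finitely many such cells, all with the same probability, and on each
of them the statistics `‖S_i(θ*)‖²` are deterministic functions of the noise vector. Relabelling
the rows by a permutation `τ` with `τ 0 = j` turns the cell `(σ, s)` into another cell, at the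
price of multiplying the noise blockwise by the signs of row `j`; since the noises are independent
and symmetric, this does not change their joint law. Hence `S₀` has the same rank distribution as
every `S_j`. The ranks under `≻_π` are a permutation of `0, …, m - 1`, so each value is taken with
probability `1/m`, and `θ* ∈ Θ̂ₙ` exactly when the rank of `S₀` is below `m - q`.
-/

open Finset

section Rank

variable {α γ : Type*} [Fintype α] [LinearOrder γ]

def rankBy (key : α → γ) (j : α) : ℕ := #{i | key i < key j}

theorem rankBy_lt_rankBy {key : α → γ} {a b : α} (h : key a < key b) :
    rankBy key a < rankBy key b :=
  card_lt_card <| (ssubset_iff_of_subset fun i hi => by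
    simp only [mem_filter, mem_univ, true_and] at hi ⊢; exact hi.trans h).2
    ⟨a, by simp [h], by simp⟩

theorem rankBy_lt_card (key : α → γ) (j : α) : rankBy key j < Fintype.card α :=
  card_lt_univ_of_notMem (x := j) (by simp)

theorem rankBy_injective {key : α → γ} (hkey : Function.Injective key) :
    Function.Injective (rankBy key) := by
  intro a b hab
  by_contra hne
  rcases lt_or_gt_of_ne (hkey.ne hne) with h | h
  · exact (rankBy_lt_rankBy h).ne hab
  · exact (rankBy_lt_rankBy h).ne' hab

theorem existsUnique_rankBy_eq {key : α → γ} (hkey : Function.Injective key) {r : ℕ}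
    (hr : r < Fintype.card α) : ∃! j, rankBy key j = r := by
  let f : α → Fin (Fintype.card α) := fun j => ⟨rankBy key j, rankBy_lt_card key j⟩
  have hf : Function.Bijective f :=
    (Fintype.bijective_iff_injective_and_card f).2
      ⟨fun a b h => rankBy_injective hkey (Fin.ext_iff.1 h), by simp⟩
  obtain ⟨j, hj⟩ := hf.2 ⟨r, hr⟩
  exact ⟨j, Fin.ext_iff.1 hj, fun i hi => hf.1 (Fin.ext (hi.trans (Fin.ext_iff.1 hj).symm))⟩

theorem rankBy_apply_equiv {β : Type*} [Fintype β] (key : α → γ) (e : β ≃ α) (j : β) :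
    rankBy key (e j) = rankBy (key ∘ e) j := by
  simp only [rankBy, card_filter]
  exact (e.sum_comp fun i => if key i < key (e j) then 1 else 0).symm

end Rank

section LexRank

variable {m : ℕ}

def lexRank (σ : Equiv.Perm (Fin m)) (z : Fin m → ℝ) : Fin m → ℕ :=
  rankBy fun i => toLex (z i, σ i)

theorem lexRank_key_injective (σ : Equiv.Perm (Fin m)) (z : Fin m → ℝ) :
    Function.Injective fun i => toLex (z i, σ i) :=
  fun _ _ h => σ.injective (congrArg Prod.snd (toLex.injective h))

theorem lexRank_apply_perm (σ τ : Equiv.Perm (Fin m)) (z : Fin m → ℝ) (j : Fin m) :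
    lexRank σ z (τ j) = lexRank (σ * τ) (z ∘ τ) j :=
  rankBy_apply_equiv _ τ j

theorem existsUnique_lexRank_eq (σ : Equiv.Perm (Fin m)) (z : Fin m → ℝ) {r : ℕ} (hr : r < m) :
    ∃! j, lexRank σ z j = r :=
  existsUnique_rankBy_eq (lexRank_key_injective σ z) (by simpa using hr)

theorem measurable_lexRank (σ : Equiv.Perm (Fin m)) (j : Fin m) :
    Measurable fun z : Fin m → ℝ => lexRank σ z j := by
  simp only [lexRank, rankBy, card_filter]
  refine Finset.measurable_sum _ fun i _ => Measurable.ite ?_ measurable_const measurable_const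
  simp only [Prod.Lex.toLex_lt_toLex]
  exact (measurableSet_lt (measurable_pi_apply i) (measurable_pi_apply j)).union
    ((measurableSet_eq_fun (measurable_pi_apply i) (measurable_pi_apply j)).inter
      (MeasurableSet.const _))

theorem spsRank_eq_lexRank {d n : ℕ} [NeZero m] (φ : Fin n → Fin d → ℝ)
    (Rhalf : Matrix (Fin d) (Fin d) ℝ) (Y : Fin n → ℝ) (a : Fin m → Fin n → ℝ)
    (σ : Equiv.Perm (Fin m)) (θ : Fin d → ℝ) :
    spsRank φ Rhalf Y a σ θ = 1 + lexRank σ (fun j => spsNormSq (spsS φ Rhalf Y a j θ)) 0 := by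
  rw [spsRank, lexRank, rankBy, ← Set.ncard_coe_finset]
  congr 2
  ext i
  simp only [SuccPi, Set.mem_ofPred_eq, coe_filter, mem_univ, true_and, Prod.Lex.toLex_lt_toLex]
  constructor
  · rintro ⟨-, h⟩; exact h.imp_right fun h => ⟨h.1.symm, h.2⟩
  · intro h
    refine ⟨?_, h.imp_right fun h => ⟨h.1.symm, h.2⟩⟩
    rintro rfl
    exact h.elim (lt_irrefl _) fun h => lt_irrefl _ h.2

end LexRank

section SignFlip

variable {ι : Type*}

def signFlip (ε : ι → ℤˣ) (x : ι → ℝ) : ι → ℝ := fun t => ((ε t : ℤ) : ℝ) * x t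

theorem signFlip_signFlip (ε δ : ι → ℤˣ) (x : ι → ℝ) :
    signFlip ε (signFlip δ x) = signFlip (ε * δ) x := by
  funext t
  simp only [signFlip, Pi.mul_apply, Units.val_mul, Int.cast_mul, mul_assoc]

theorem measurable_signFlip (ε : ι → ℤˣ) : Measurable (signFlip ε) :=
  measurable_pi_lambda _ fun t => (measurable_pi_apply t).const_mul _

theorem MeasureTheory.Measure.map_units_mul_of_map_neg {ρ : Measure ℝ} (hρ : ρ.map Neg.neg = ρ)
    (u : ℤˣ) :
    ρ.map (fun y => ((u : ℤ) : ℝ) * y) = ρ := by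
  rcases Int.units_eq_one_or u with rfl | rfl
  · simp
  · simpa [neg_one_mul] using hρ

theorem measurePreserving_signFlip_pi [Fintype ι] {ρ : ι → Measure ℝ} [∀ t, SigmaFinite (ρ t)]
    (hρ : ∀ t, (ρ t).map Neg.neg = ρ t) (ε : ι → ℤˣ) :
    MeasurePreserving (signFlip ε) (Measure.pi ρ) (Measure.pi ρ) := by
  have hmap (t : ι) := Measure.map_units_mul_of_map_neg (hρ t) (ε t)
  have (t : ι) : SigmaFinite ((ρ t).map fun y => ((ε t : ℤ) : ℝ) * y) := by
    rw [hmap t]; infer_instance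
  refine ⟨measurable_signFlip ε, ?_⟩
  change (Measure.pi ρ).map (fun x t => ((ε t : ℤ) : ℝ) * x t) = _
  rw [Measure.pi_map_pi fun t => (measurable_const_mul _).aemeasurable]
  simp only [hmap]

end SignFlip

section Exchangeability

variable {ι κ : Type*} {m : ℕ} [NeZero m]

abbrev SignPattern (m : ℕ) [NeZero m] (κ : Type*) := {s : Fin m → κ → ℤˣ // ∀ k, s 0 k = 1}

/-- Row `τ 0` becomes the reference row; its signs are absorbed into the noise. -/
def SignPattern.relabel (τ : Equiv.Perm (Fin m)) (s : SignPattern m κ) : SignPattern m κ :=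
  ⟨fun i k => s.1 (τ i) k * (s.1 (τ 0) k)⁻¹, fun _ => mul_inv_cancel _⟩

theorem SignPattern.relabel_inv_relabel (τ : Equiv.Perm (Fin m)) (s : SignPattern m κ) :
    relabel τ⁻¹ (relabel τ s) = s := by
  apply Subtype.ext
  funext i k
  simp [relabel, s.2 k, mul_assoc, Int.units_mul_self]

def SignPattern.relabelEquiv (τ : Equiv.Perm (Fin m)) : SignPattern m κ ≃ SignPattern m κ where
  toFun := relabel τ
  invFun := relabel τ⁻¹
  left_inv := relabel_inv_relabel τ
  right_inv s := by simpa using relabel_inv_relabel τ⁻¹ s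

def signedStats (F : (ι → ℝ) → ℝ) (blk : ι → κ) (s : SignPattern m κ) (x : ι → ℝ) :
    Fin m → ℝ :=
  fun i => F (signFlip (fun t => s.1 i (blk t)) x)

theorem signedStats_comp_perm (F : (ι → ℝ) → ℝ) (blk : ι → κ) (s : SignPattern m κ)
    (τ : Equiv.Perm (Fin m)) (x : ι → ℝ) :
    signedStats F blk s x ∘ τ =
      signedStats F blk (s.relabel τ) (signFlip (fun t => s.1 (τ 0) (blk t)) x) := by
  funext i
  simp only [Function.comp_apply, signedStats, SignPattern.relabel, signFlip_signFlip]
  congr 2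
  funext t
  exact (inv_mul_cancel_right _ _).symm

variable {F : (ι → ℝ) → ℝ} {ν : Measure (ι → ℝ)}

theorem measurable_signedStats (hF : Measurable F) (blk : ι → κ) (s : SignPattern m κ) :
    Measurable (signedStats F blk s) :=
  measurable_pi_lambda _ fun _ => hF.comp (measurable_signFlip _)

theorem measurableSet_lexRank_signedStats_eq (hF : Measurable F) (blk : ι → κ)
    (σ : Equiv.Perm (Fin m)) (s : SignPattern m κ) (j : Fin m) (r : ℕ) :
    MeasurableSet {x | lexRank σ (signedStats F blk s x) j = r} :=
  (measurable_lexRank σ j).comp (measurable_signedStats hF blk s) (measurableSet_singleton r)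

theorem sum_measure_lexRank_eq_one [IsProbabilityMeasure ν] (hF : Measurable F) (blk : ι → κ)
    (σ : Equiv.Perm (Fin m)) (s : SignPattern m κ) {r : ℕ} (hr : r < m) :
    ∑ j, ν {x | lexRank σ (signedStats F blk s x) j = r} = 1 := by
  have hdisj : Pairwise
      (Function.onFun Disjoint fun j => {x | lexRank σ (signedStats F blk s x) j = r}) :=
    fun i j hij => Set.disjoint_left.2 fun x hi hj =>
      hij ((existsUnique_lexRank_eq σ _ hr).unique hi hj)
  have hcover : (⋃ j, {x | lexRank σ (signedStats F blk s x) j = r}) = Set.univ :=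
    Set.eq_univ_of_forall fun x => Set.mem_iUnion.2 (existsUnique_lexRank_eq σ _ hr).exists
  rw [← tsum_fintype (L := .unconditional _), ← measure_iUnion hdisj
    fun j => measurableSet_lexRank_signedStats_eq hF blk σ s j r, hcover, measure_univ]

variable [Fintype κ] [DecidableEq κ]

theorem sum_measure_lexRank_signedStats_apply_perm (hν : ∀ ε, MeasurePreserving (signFlip ε) ν ν)
    (hF : Measurable F) (blk : ι → κ) (τ : Equiv.Perm (Fin m)) (r : ℕ) :
    ∑ c : Equiv.Perm (Fin m) × SignPattern m κ,
        ν {x | lexRank c.1 (signedStats F blk c.2 x) (τ 0) = r} =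
      ∑ c : Equiv.Perm (Fin m) × SignPattern m κ,
        ν {x | lexRank c.1 (signedStats F blk c.2 x) 0 = r} := by
  have hcell (c : Equiv.Perm (Fin m) × SignPattern m κ) :
      ν {x | lexRank c.1 (signedStats F blk c.2 x) (τ 0) = r} =
        ν {x | lexRank (c.1 * τ) (signedStats F blk (c.2.relabel τ) x) 0 = r} := by
    have hpre : {x | lexRank c.1 (signedStats F blk c.2 x) (τ 0) = r} =
        signFlip (fun t => c.2.1 (τ 0) (blk t)) ⁻¹'
          {x | lexRank (c.1 * τ) (signedStats F blk (c.2.relabel τ) x) 0 = r} := by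
      ext x
      simp only [Set.mem_preimage, Set.mem_ofPred_eq, lexRank_apply_perm, signedStats_comp_perm]
    rw [hpre, (hν _).measure_preimage
      (measurableSet_lexRank_signedStats_eq hF blk _ _ 0 r).nullMeasurableSet]
  rw [Finset.sum_congr rfl fun c _ => hcell c]
  exact ((Equiv.mulRight τ).prodCongr (SignPattern.relabelEquiv τ)).sum_comp
    fun c => ν {x | lexRank c.1 (signedStats F blk c.2 x) 0 = r}

theorem natCast_mul_sum_measure_lexRank_signedStats_eq [IsProbabilityMeasure ν]
    (hν : ∀ ε, MeasurePreserving (signFlip ε) ν ν) (hF : Measurable F) (blk : ι → κ)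
    {r : ℕ} (hr : r < m) :
    (m : ℝ≥0∞) * ∑ c : Equiv.Perm (Fin m) × SignPattern m κ,
        ν {x | lexRank c.1 (signedStats F blk c.2 x) 0 = r} =
      Fintype.card (Equiv.Perm (Fin m) × SignPattern m κ) := by
  have hswap (j : Fin m) := sum_measure_lexRank_signedStats_apply_perm hν hF blk (Equiv.swap 0 j) r
  simp only [Equiv.swap_apply_left] at hswap
  calc (m : ℝ≥0∞) * ∑ c : Equiv.Perm (Fin m) × SignPattern m κ,
        ν {x | lexRank c.1 (signedStats F blk c.2 x) 0 = r}
      = ∑ j : Fin m, ∑ c : Equiv.Perm (Fin m) × SignPattern m κ,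
          ν {x | lexRank c.1 (signedStats F blk c.2 x) j = r} := by
        simp [hswap]
    _ = ∑ c : Equiv.Perm (Fin m) × SignPattern m κ, ∑ j : Fin m,
          ν {x | lexRank c.1 (signedStats F blk c.2 x) j = r} := Finset.sum_comm
    _ = Fintype.card (Equiv.Perm (Fin m) × SignPattern m κ) := by
        simp [sum_measure_lexRank_eq_one hF blk _ _ hr]

theorem natCast_mul_sum_measure_lexRank_signedStats_lt [IsProbabilityMeasure ν]
    (hν : ∀ ε, MeasurePreserving (signFlip ε) ν ν) (hF : Measurable F) (blk : ι → κ)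
    {R : ℕ} (hR : R ≤ m) :
    (m : ℝ≥0∞) * ∑ c : Equiv.Perm (Fin m) × SignPattern m κ,
        ν {x | lexRank c.1 (signedStats F blk c.2 x) 0 < R} =
      R * Fintype.card (Equiv.Perm (Fin m) × SignPattern m κ) := by
  have hlt (c : Equiv.Perm (Fin m) × SignPattern m κ) :
      ν {x | lexRank c.1 (signedStats F blk c.2 x) 0 < R} =
        ∑ r ∈ range R, ν {x | lexRank c.1 (signedStats F blk c.2 x) 0 = r} := by
    rw [← measure_biUnion_finset
      (fun r _ r' _ h => Set.disjoint_left.2 fun x h1 h2 => h (h1.symm.trans h2))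
      fun r _ => measurableSet_lexRank_signedStats_eq hF blk _ _ 0 r]
    congr 1; ext x; simp
  simp only [hlt]
  rw [Finset.sum_comm, Finset.mul_sum, Finset.sum_congr rfl fun r hr =>
    natCast_mul_sum_measure_lexRank_signedStats_eq hν hF blk ((mem_range.1 hr).trans_le hR)]
  simp

end Exchangeability

/-- The cells need not be measurable (`π` is not assumed measurable), so additivity is replaced by
subadditivity applied to both `S` and `Sᶜ`. -/
theorem measure_eq_sum_inter_of_ae_cover {Ω ι : Type*} [MeasurableSpace Ω] {μ : Measure Ω}
    [IsProbabilityMeasure μ] [Fintype ι] {C : ι → Set Ω} (hC : ∀ᵐ ω ∂μ, ∃ i, ω ∈ C i)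
    (S : Set Ω) (h : ∑ i, (μ (S ∩ C i) + μ (Sᶜ ∩ C i)) ≤ 1) :
    μ S = ∑ i, μ (S ∩ C i) := by
  have hle (A : Set Ω) : μ A ≤ ∑ i, μ (A ∩ C i) := calc
    μ A = μ (A ∩ ⋃ i, C i) :=
      (measure_inter_conull (ae_iff.1 (hC.mono fun _ h => Set.mem_iUnion.2 h))).symm
    _ = μ (⋃ i, A ∩ C i) := by rw [Set.inter_iUnion]
    _ ≤ ∑ i, μ (A ∩ C i) := measure_iUnion_fintype_le μ _
  rw [Finset.sum_add_distrib] at h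
  have hfin : ∑ i, μ (Sᶜ ∩ C i) ≠ ⊤ := ne_top_of_le_ne_top ENNReal.one_ne_top (le_add_self.trans h)
  refine le_antisymm (hle S) (ENNReal.le_of_add_le_add_right hfin ?_)
  calc ∑ i, μ (S ∩ C i) + ∑ i, μ (Sᶜ ∩ C i) ≤ 1 := h
    _ ≤ μ S + μ Sᶜ := by simpa using measure_union_le (μ := μ) S Sᶜ
    _ ≤ μ S + ∑ i, μ (Sᶜ ∩ C i) := by gcongr; exact hle Sᶜ

theorem ProbabilityTheory.iIndep.measure_inter_inter {Ω : Type*} [MeasurableSpace Ω]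
    {μ : Measure Ω} {m : Fin 3 → MeasurableSpace Ω} (h : iIndep m μ) {A B C : Set Ω}
    (hA : MeasurableSet[m 0] A) (hB : MeasurableSet[m 1] B) (hC : MeasurableSet[m 2] C) :
    μ (A ∩ B ∩ C) = μ A * μ B * μ C := by
  have hABC : A ∩ B ∩ C = ⋂ i, ![A, B, C] i := by
    ext; simp [Fin.forall_fin_succ, and_assoc]
  rw [hABC, h.meas_iInter fun i => by fin_cases i <;> assumption, Fin.prod_univ_three]
  rfl

theorem IsRandomSign.ae_eq_one_or_eq_neg_one {Ω : Type*} [MeasurableSpace Ω] {μ : Measure Ω}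
    [IsProbabilityMeasure μ] {f : Ω → ℝ} (hf : IsRandomSign μ f) (hm : Measurable f) :
    ∀ᵐ ω ∂μ, f ω = 1 ∨ f ω = -1 := by
  have h1 : MeasurableSet {ω | f ω = 1} := hm (measurableSet_singleton 1)
  have h2 : MeasurableSet {ω | f ω = -1} := hm (measurableSet_singleton (-1))
  have hdisj : Disjoint {ω | f ω = 1} {ω | f ω = -1} :=
    Set.disjoint_left.2 fun ω (h : f ω = 1) (h' : f ω = -1) => by norm_num [h] at h'
  refine (ae_iff_measure_eq (p := fun ω => f ω = 1 ∨ f ω = -1)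
    (h1.union h2).nullMeasurableSet).2 ?_
  rw [Set.ofPred_or, measure_union hdisj h2, hf.1, hf.2, measure_univ, ENNReal.add_halves]

section SignCell

variable {Ω κ : Type*} {m : ℕ} [NeZero m] {abar : Fin m → κ → Ω → ℝ}

def signCell (abar : Fin m → κ → Ω → ℝ) (s : SignPattern m κ) : Set Ω :=
  {ω | ∀ i k, abar i k ω = ((s.1 i k : ℤ) : ℝ)}

theorem measurableSet_comap_signCell [Countable κ] (s : SignPattern m κ) :
    MeasurableSet[MeasurableSpace.comap (fun ω (p : Fin m × κ) => abar p.1 p.2 ω) inferInstance]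
      (signCell abar s) :=
  ⟨{fun p => ((s.1 p.1 p.2 : ℤ) : ℝ)}, measurableSet_singleton _, by
    ext ω; simp [signCell, funext_iff]⟩

theorem pairwise_disjoint_signCell : Pairwise (Function.onFun Disjoint (signCell (m := m) abar)) :=
  fun _ _ hne => Set.disjoint_left.2 fun _ hs hs' => hne <| Subtype.ext <| funext fun i =>
    funext fun k => Units.ext <| Int.cast_injective ((hs i k).symm.trans (hs' i k))

theorem statistics_eq_signedStats_of_mem_signCell {ι : Type*} {F : (ι → ℝ) → ℝ} (blk : ι → κ)
    {X : Ω → ι → ℝ} {s : SignPattern m κ} {ω : Ω} (hω : ω ∈ signCell abar s) :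
    (fun i => F fun t => abar i (blk t) ω * X ω t) = signedStats F blk s (X ω) :=
  funext fun i => congrArg F <| funext fun t => by rw [hω i (blk t)]; rfl

variable [MeasurableSpace Ω] {μ : Measure Ω}

theorem measurableSet_signCell [Countable κ] (habarmeas : ∀ i k, Measurable (abar i k))
    (s : SignPattern m κ) : MeasurableSet (signCell abar s) :=
  (measurable_pi_lambda _ fun p : Fin m × κ => habarmeas p.1 p.2).comap_le _
    (measurableSet_comap_signCell s)

theorem ae_exists_mem_signCell [IsProbabilityMeasure μ] [Countable κ]
    (habar0 : ∀ k ω, abar 0 k ω = 1) (habarmeas : ∀ i k, Measurable (abar i k))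
    (habarsign : ∀ i : Fin m, i ≠ 0 → ∀ k, IsRandomSign μ (abar i k)) :
    ∀ᵐ ω ∂μ, ∃ s, ω ∈ signCell abar s := by
  classical
  have hsign : ∀ᵐ ω ∂μ, ∀ i k, abar i k ω = 1 ∨ abar i k ω = -1 := by
    simp only [ae_all_iff]
    intro i k
    by_cases hi : i = 0
    · subst hi; exact .of_forall fun ω => .inl (habar0 k ω)
    · exact (habarsign i hi k).ae_eq_one_or_eq_neg_one (habarmeas i k)
  filter_upwards [hsign] with ω hω
  refine ⟨⟨fun i k => if abar i k ω = 1 then 1 else -1, fun k => by simp [habar0]⟩, fun i k => ?_⟩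
  rcases hω i k with h | h <;> norm_num [h]

theorem measure_signCell [IsProbabilityMeasure μ] [Fintype κ]
    (habar0 : ∀ k ω, abar 0 k ω = 1)
    (habarindep : iIndepFun (fun p : Fin m × κ => abar p.1 p.2) μ)
    (habarsign : ∀ i : Fin m, i ≠ 0 → ∀ k, IsRandomSign μ (abar i k)) (s : SignPattern m κ) :
    μ (signCell abar s) = ∏ p : Fin m × κ, if p.1 = 0 then 1 else 2⁻¹ := by
  have hcell : signCell abar s =
      ⋂ p : Fin m × κ, {ω | abar p.1 p.2 ω = ((s.1 p.1 p.2 : ℤ) : ℝ)} := by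
    ext ω; simp [signCell]
  rw [hcell, habarindep.meas_iInter
    (s := fun p => {ω | abar p.1 p.2 ω = ((s.1 p.1 p.2 : ℤ) : ℝ)})
    fun p => ⟨{((s.1 p.1 p.2 : ℤ) : ℝ)}, measurableSet_singleton _, rfl⟩]
  refine Finset.prod_congr rfl fun ⟨i, k⟩ _ => ?_
  split_ifs with hi
  · subst hi
    simp [s.2 k, habar0]
  · rcases Int.units_eq_one_or (s.1 i k) with h | h
    · simpa [h] using (habarsign i hi k).1
    · simpa [h] using (habarsign i hi k).2

theorem sum_measure_signCell [IsProbabilityMeasure μ] [Fintype κ] [DecidableEq κ]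
    (habar0 : ∀ k ω, abar 0 k ω = 1) (habarmeas : ∀ i k, Measurable (abar i k))
    (habarsign : ∀ i : Fin m, i ≠ 0 → ∀ k, IsRandomSign μ (abar i k)) :
    ∑ s : SignPattern m κ, μ (signCell abar s) = 1 := by
  rw [← tsum_fintype (L := .unconditional _),
    ← measure_iUnion pairwise_disjoint_signCell (measurableSet_signCell habarmeas)]
  refine (prob_compl_eq_zero_iff (.iUnion (measurableSet_signCell habarmeas))).1 (ae_iff.1 ?_)
  exact (ae_exists_mem_signCell habar0 habarmeas habarsign).mono fun _ h => Set.mem_iUnion.2 h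

end SignCell

section Exactness

variable {Ω ι κ : Type*} [MeasurableSpace Ω] {μ : Measure Ω} [Fintype κ]
  {m : ℕ} [NeZero m] {X : Ω → ι → ℝ} {abar : Fin m → κ → Ω → ℝ} {π : Ω → Equiv.Perm (Fin m)}

theorem measure_preimage_inter_signCell_inter (hX : Measurable X)
    (hindep : iIndep ![MeasurableSpace.comap X inferInstance,
      MeasurableSpace.comap (fun ω (p : Fin m × κ) => abar p.1 p.2 ω) inferInstance,
      MeasurableSpace.comap π inferInstance] μ)
    {A : Set (ι → ℝ)} (hA : MeasurableSet A) (s : SignPattern m κ) (σ : Equiv.Perm (Fin m)) :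
    μ (X ⁻¹' A ∩ signCell abar s ∩ {ω | π ω = σ}) =
      μ.map X A * μ (signCell abar s) * μ {ω | π ω = σ} := by
  have hπσ : MeasurableSet[MeasurableSpace.comap π inferInstance] {ω | π ω = σ} :=
    ⟨{σ}, trivial, rfl⟩
  rw [hindep.measure_inter_inter ⟨A, hA, rfl⟩ (measurableSet_comap_signCell s) hπσ,
    Measure.map_apply hX hA]

variable [DecidableEq κ] [IsProbabilityMeasure μ]

theorem sum_measure_signCell_mul_measure_perm_eq_one (habar0 : ∀ k ω, abar 0 k ω = 1)
    (habarmeas : ∀ i k, Measurable (abar i k))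
    (habarsign : ∀ i : Fin m, i ≠ 0 → ∀ k, IsRandomSign μ (abar i k))
    (hπ : ∀ σ : Equiv.Perm (Fin m), μ {ω | π ω = σ} = (m.factorial : ℝ≥0∞)⁻¹) :
    ∑ c : Equiv.Perm (Fin m) × SignPattern m κ,
      μ (signCell abar c.2) * μ {ω | π ω = c.1} = 1 := by
  rw [Fintype.sum_prod_type]
  simp only [← Finset.sum_mul, sum_measure_signCell habar0 habarmeas habarsign, one_mul, hπ,
    Finset.sum_const, Finset.card_univ, Fintype.card_perm, Fintype.card_fin, nsmul_eq_mul]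
  exact ENNReal.mul_inv_cancel (by simp [Nat.factorial_ne_zero]) (by simp)

theorem measure_eq_sum_signCell_perm (hX : Measurable X) (habar0 : ∀ k ω, abar 0 k ω = 1)
    (habarmeas : ∀ i k, Measurable (abar i k))
    (habarsign : ∀ i : Fin m, i ≠ 0 → ∀ k, IsRandomSign μ (abar i k))
    (hπ : ∀ σ : Equiv.Perm (Fin m), μ {ω | π ω = σ} = (m.factorial : ℝ≥0∞)⁻¹)
    (hindep : iIndep ![MeasurableSpace.comap X inferInstance,
      MeasurableSpace.comap (fun ω (p : Fin m × κ) => abar p.1 p.2 ω) inferInstance,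
      MeasurableSpace.comap π inferInstance] μ)
    {E : Set Ω} {D : Equiv.Perm (Fin m) × SignPattern m κ → Set (ι → ℝ)}
    (hD : ∀ c, MeasurableSet (D c))
    (hED : ∀ c, ∀ ω ∈ signCell abar c.2, π ω = c.1 → (ω ∈ E ↔ X ω ∈ D c)) :
    μ E = ∑ c, μ.map X (D c) * μ (signCell abar c.2) * μ {ω | π ω = c.1} := by
  have := Measure.isProbabilityMeasure_map (μ := μ) hX.aemeasurable
  let C (c : Equiv.Perm (Fin m) × SignPattern m κ) := signCell abar c.2 ∩ {ω | π ω = c.1}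
  have hC : ∀ᵐ ω ∂μ, ∃ c, ω ∈ C c :=
    (ae_exists_mem_signCell habar0 habarmeas habarsign).mono fun ω ⟨s, hs⟩ => ⟨(π ω, s), hs, rfl⟩
  have hcell (c) (S : Set Ω) {A : Set (ι → ℝ)} (hA : MeasurableSet A)
      (hSA : ∀ ω ∈ signCell abar c.2, π ω = c.1 → (ω ∈ S ↔ X ω ∈ A)) :
      μ (S ∩ C c) = μ.map X A * μ (signCell abar c.2) * μ {ω | π ω = c.1} := by
    rw [← measure_preimage_inter_signCell_inter hX hindep hA, Set.inter_assoc]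
    congr 1
    ext ω
    simp only [C, Set.mem_inter_iff, Set.mem_preimage, Set.mem_ofPred_eq]
    exact ⟨fun ⟨h, hc⟩ => ⟨(hSA ω hc.1 hc.2).1 h, hc⟩, fun ⟨h, hc⟩ => ⟨(hSA ω hc.1 hc.2).2 h, hc⟩⟩
  have hE (c) := hcell c E (hD c) (hED c)
  have hEc (c) := hcell c Eᶜ (hD c).compl fun ω hs hσ => (hED c ω hs hσ).not
  rw [measure_eq_sum_inter_of_ae_cover hC E, Finset.sum_congr rfl fun c _ => hE c]
  refine (Eq.trans (Finset.sum_congr rfl fun c _ => ?_)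
    (sum_measure_signCell_mul_measure_perm_eq_one habar0 habarmeas habarsign hπ)).le
  rw [hE, hEc, mul_assoc, mul_assoc, ← add_mul, measure_add_measure_compl (hD c), measure_univ,
    one_mul]

theorem measure_lexRank_signedStats_lt (hX : Measurable X)
    (hXflip : ∀ ε, MeasurePreserving (signFlip ε) (μ.map X) (μ.map X))
    (habar0 : ∀ k ω, abar 0 k ω = 1) (habarmeas : ∀ i k, Measurable (abar i k))
    (habarindep : iIndepFun (fun p : Fin m × κ => abar p.1 p.2) μ)
    (habarsign : ∀ i : Fin m, i ≠ 0 → ∀ k, IsRandomSign μ (abar i k))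
    (hπ : ∀ σ : Equiv.Perm (Fin m), μ {ω | π ω = σ} = (m.factorial : ℝ≥0∞)⁻¹)
    (hindep : iIndep ![MeasurableSpace.comap X inferInstance,
      MeasurableSpace.comap (fun ω (p : Fin m × κ) => abar p.1 p.2 ω) inferInstance,
      MeasurableSpace.comap π inferInstance] μ)
    {F : (ι → ℝ) → ℝ} (hF : Measurable F) (blk : ι → κ) {R : ℕ} (hR : R ≤ m) :
    μ {ω | lexRank (π ω) (fun i => F fun t => abar i (blk t) ω * X ω t) 0 < R} = R / m := by
  have := Measure.isProbabilityMeasure_map (μ := μ) hX.aemeasurable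
  set w : ℝ≥0∞ := (∏ p : Fin m × κ, if p.1 = 0 then 1 else 2⁻¹) * (m.factorial : ℝ≥0∞)⁻¹
  have hw (c : Equiv.Perm (Fin m) × SignPattern m κ) :
      μ (signCell abar c.2) * μ {ω | π ω = c.1} = w := by
    rw [measure_signCell habar0 habarindep habarsign, hπ]
  have hcard : (Fintype.card (Equiv.Perm (Fin m) × SignPattern m κ) : ℝ≥0∞) * w = 1 := by
    simpa [hw] using sum_measure_signCell_mul_measure_perm_eq_one habar0 habarmeas habarsign hπ
  rw [measure_eq_sum_signCell_perm hX habar0 habarmeas habarsign hπ hindep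
    (D := fun c => {x | lexRank c.1 (signedStats F blk c.2 x) 0 < R})
    (fun c => (measurable_lexRank c.1 0).comp (measurable_signedStats hF blk c.2) measurableSet_Iio)
    fun c ω hω hπω => by
      simp only [Set.mem_ofPred_eq, hπω,
        statistics_eq_signedStats_of_mem_signCell blk hω]]
  simp only [mul_assoc, hw, ← Finset.sum_mul]
  rw [ENNReal.eq_div_iff (by simp [NeZero.ne]) (by simp), ← mul_assoc,
    natCast_mul_sum_measure_lexRank_signedStats_lt hXflip hF blk hR, mul_assoc, hcard, mul_one]

end Exactness

theorem measurePreserving_signFlip_map_of_iIndepFun {Ω ι : Type*} [MeasurableSpace Ω]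
    {μ : Measure Ω} [IsProbabilityMeasure μ] [Fintype ι] {N : ι → Ω → ℝ}
    (hNmeas : ∀ t, Measurable (N t)) (hNindep : iIndepFun N μ)
    (hNsymm : ∀ t, μ.map (N t) = μ.map (fun ω => -(N t ω))) (ε : ι → ℤˣ) :
    MeasurePreserving (signFlip ε) (μ.map fun ω t => N t ω) (μ.map fun ω t => N t ω) := by
  have (t : ι) := Measure.isProbabilityMeasure_map (μ := μ) (hNmeas t).aemeasurable
  rw [(iIndepFun_iff_map_fun_eq_pi_map fun t => (hNmeas t).aemeasurable).1 hNindep]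
  refine measurePreserving_signFlip_pi (fun t => ?_) ε
  rw [Measure.map_map measurable_neg (hNmeas t), hNsymm t]
  rfl

theorem spsS_add_noise {d n m : ℕ} (φ : Fin n → Fin d → ℝ) (Rhalf : Matrix (Fin d) (Fin d) ℝ)
    (θ : Fin d → ℝ) (η : Fin n → ℝ) (a : Fin m → Fin n → ℝ) (i : Fin m) :
    spsS φ Rhalf (fun t => φ t ⬝ᵥ θ + η t) a i θ =
      Rhalf⁻¹ *ᵥ ((n : ℝ)⁻¹ • ∑ t, (a i t * η t) • φ t) := by
  simp [spsS]

theorem natCast_sub_div_eq_ofReal_one_sub_div {m : ℕ} (hm : m ≠ 0) (q : ℕ) :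
    ((m - q : ℕ) : ℝ≥0∞) / m = ENNReal.ofReal (1 - (q : ℝ) / m) := by
  have hm' : (0 : ℝ) < m := by positivity
  rcases le_total q m with hqm | hmq
  · rw [show 1 - (q : ℝ) / m = ((m - q : ℕ) : ℝ) / m by rw [Nat.cast_sub hqm]; field_simp,
      ENNReal.ofReal_div_of_pos hm', ENNReal.ofReal_natCast, ENNReal.ofReal_natCast]
  · rw [Nat.sub_eq_zero_of_le hmq, Nat.cast_zero, ENNReal.zero_div, eq_comm,
      ENNReal.ofReal_eq_zero, sub_nonpos, one_le_div hm']
    exact_mod_cast hmq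

theorem block_sps_exact_confidence_general
    {Ω : Type*} [MeasurableSpace Ω] (μ : Measure Ω) [IsProbabilityMeasure μ]
    (d K T m q : ℕ) [NeZero m]
    (φ : Fin (K * T) → Fin d → ℝ)
    (Rhalf : Matrix (Fin d) (Fin d) ℝ)
    (θstar : Fin d → ℝ)
    -- the noises: independent, each symmetrically distributed about zero (A1)
    (N : Fin (K * T) → Ω → ℝ)
    (hNmeas : ∀ t, Measurable (N t))
    (hNindep : iIndepFun N μ)
    (hNsymm : ∀ t, μ.map (N t) = μ.map (fun ω => -(N t ω)))
    -- the blockwise random signs, with `abar 0 ≡ 1` the reference index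
    (abar : Fin m → Fin K → Ω → ℝ)
    (habar0 : ∀ k ω, abar 0 k ω = 1)
    (habarmeas : ∀ i k, Measurable (abar i k))
    (habarindep : iIndepFun
      (fun p : Fin m × Fin K => abar p.1 p.2) μ)
    (habarsign : ∀ i : Fin m, i ≠ 0 → ∀ k, IsRandomSign μ (abar i k))
    -- the uniformly distributed random permutation
    (π : Ω → Equiv.Perm (Fin m))
    (hπ : ∀ σ : Equiv.Perm (Fin m), μ {ω | π ω = σ} = (m.factorial : ℝ≥0∞)⁻¹)
    -- the noises, the blockwise signs and the permutation are mutually independent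
    (hgroups : iIndep
      ![MeasurableSpace.comap (fun ω (t : Fin (K * T)) => N t ω) inferInstance,
        MeasurableSpace.comap (fun ω (p : Fin m × Fin K) => abar p.1 p.2 ω) inferInstance,
        MeasurableSpace.comap π inferInstance] μ) :
    μ {ω | θstar ∈ spsRegion φ Rhalf (fun t => φ t ⬝ᵥ θstar + N t ω)
        (fun i t => abar i (blockIdx K T t) ω) (π ω) q}
      = ENNReal.ofReal (1 - (q : ℝ) / m) := by
  let F (x : Fin (K * T) → ℝ) : ℝ :=
    spsNormSq (Rhalf⁻¹ *ᵥ (((K * T : ℕ) : ℝ)⁻¹ • ∑ t, x t • φ t))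
  have hF : Measurable F := by
    refine Continuous.measurable ?_
    unfold F spsNormSq
    fun_prop
  have hregion : {ω | θstar ∈ spsRegion φ Rhalf (fun t => φ t ⬝ᵥ θstar + N t ω)
      (fun i t => abar i (blockIdx K T t) ω) (π ω) q} =
      {ω | lexRank (π ω) (fun i => F fun t => abar i (blockIdx K T t) ω * N t ω) 0 < m - q} := by
    ext ω
    simp only [spsRegion, Set.mem_ofPred_eq, spsRank_eq_lexRank, spsS_add_noise, F]
    omega
  rw [hregion, ← natCast_sub_div_eq_ofReal_one_sub_div (NeZero.ne m)]
  exact measure_lexRank_signedStats_lt (measurable_pi_lambda _ hNmeas)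
    (measurePreserving_signFlip_map_of_iIndepFun hNmeas hNindep hNsymm) habar0 habarmeas
    habarindep habarsign hπ hgroups hF (blockIdx K T) (Nat.sub_le m q)

/-- **Block SPS exactness for independent noise.** With `n = K·T` and blockwise-constant
random signs `α_{i,(k−1)T+j} = ᾱ_{i,k}`, under A1 and A2 the Block SPS confidence region
still contains the true parameter with exact probability `1 − q/m`. -/
theorem block_sps_exact_confidence
    {Ω : Type*} [MeasurableSpace Ω] (μ : Measure Ω) [IsProbabilityMeasure μ]
    (d K T m q : ℕ) [NeZero m] (hK : 0 < K) (hT : 0 < T) (hq : 0 < q) (hqm : q < m)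
    (φ : Fin (K * T) → Fin d → ℝ)
    (Rn : Matrix (Fin d) (Fin d) ℝ)
    (hRn : Rn = ((K * T : ℕ) : ℝ)⁻¹ • ∑ t, vecMulVec (φ t) (φ t))
    (hRnPD : Rn.PosDef)
    (Rhalf : Matrix (Fin d) (Fin d) ℝ)
    (hRhalfPD : Rhalf.PosDef)
    (hRhalf : Rhalf * Rhalfᵀ = Rn)
    (θstar : Fin d → ℝ)
    -- the noises: independent, each symmetrically distributed about zero (A1)
    (N : Fin (K * T) → Ω → ℝ)
    (hNmeas : ∀ t, Measurable (N t))
    (hNindep : iIndepFun N μ)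
    (hNsymm : ∀ t, μ.map (N t) = μ.map (fun ω => -(N t ω)))
    -- the blockwise random signs, with `abar 0 ≡ 1` the reference index
    (abar : Fin m → Fin K → Ω → ℝ)
    (habar0 : ∀ k ω, abar 0 k ω = 1)
    (habarmeas : ∀ i k, Measurable (abar i k))
    (habarindep : iIndepFun
      (fun p : Fin m × Fin K => abar p.1 p.2) μ)
    (habarsign : ∀ i : Fin m, i ≠ 0 → ∀ k, IsRandomSign μ (abar i k))
    -- the uniformly distributed random permutation
    (π : Ω → Equiv.Perm (Fin m))
    (hπ : ∀ σ : Equiv.Perm (Fin m), μ {ω | π ω = σ} = (m.factorial : ℝ≥0∞)⁻¹)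
    -- the noises, the blockwise signs and the permutation are mutually independent
    (hgroups : iIndep
      ![MeasurableSpace.comap (fun ω (t : Fin (K * T)) => N t ω) inferInstance,
        MeasurableSpace.comap (fun ω (p : Fin m × Fin K) => abar p.1 p.2 ω) inferInstance,
        MeasurableSpace.comap π inferInstance] μ) :
    μ {ω | θstar ∈ spsRegion φ Rhalf (fun t => φ t ⬝ᵥ θstar + N t ω)
        (fun i t => abar i (blockIdx K T t) ω) (π ω) q}
      = ENNReal.ofReal (1 - (q : ℝ) / m) :=
  block_sps_exact_confidence_general μ d K T m q φ Rhalf θstar N hNmeas hNindep hNsymm abar habar0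
    habarmeas habarindep habarsign π hπ hgroups

end
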